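/- Let 𝔞 > 0, let n ∈ ℕ, and let X_1, …, X_n be independent identically distributed random variables on a probability space, each exponentially distributed with rate 2𝔞. Then ℙ( Σ_{i=1}^{n} X_i < 1/36 ) ≤ e^{𝔞/36} · (2/3)^n. -/

import Mathlib

open MeasureTheory ProbabilityTheory Real Set

lemma aux_int_Ioi {b : ℝ} (hb : 0 < b) :
    ∫ x in Ioi (0:ℝ), rexp (-(b * x)) = 1 / b := by
  have h := integral_comp_mul_left_Ioi (fun x => rexp (-x)) 0 hb
  simp only [mul_zero] at h
  rw [h, integral_exp_neg_Ioi_zero, smul_eq_mul, mul_one, one_div]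

lemma aux_ae_nonneg {r : ℝ} : ∀ᵐ x ∂(expMeasure r), 0 ≤ x := by
  rw [ae_iff]
  have : {x : ℝ | ¬ 0 ≤ x} = Iio 0 := by ext x; simp only [Set.mem_setOf_eq, mem_Iio, not_le]
  rw [this]
  show (expMeasure r) (Iio 0) = 0
  rw [expMeasure, gammaMeasure, withDensity_apply _ measurableSet_Iio]
  exact lintegral_exponentialPDF_of_nonpos le_rfl

lemma aux_integrable {r t : ℝ} (hr : 0 < r) (ht : 0 ≤ t) :
    Integrable (fun x => rexp (-t * x)) (expMeasure r) := by
  have : IsProbabilityMeasure (expMeasure r) := isProbabilityMeasure_expMeasure hr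
  refine Integrable.mono' (integrable_const 1)
    ((measurable_id.const_mul (-t)).exp.aestronglyMeasurable) ?_
  filter_upwards [aux_ae_nonneg (r := r)] with x hx
  rw [norm_of_nonneg (exp_pos _).le]
  exact exp_le_one_iff.mpr (by nlinarith)

lemma aux_integral {r t : ℝ} (hr : 0 < r) (ht : 0 ≤ t) :
    ∫ x, rexp (-t * x) ∂(expMeasure r) = r / (r + t) := by
  have hrt : 0 < r + t := by linarith
  have hgm : Measurable fun x : ℝ => rexp (-t * x) := by fun_prop
  have hmg : Measurable fun x : ℝ => ENNReal.ofReal (rexp (-t * x)) :=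
    ENNReal.measurable_ofReal.comp hgm
  rw [integral_eq_lintegral_of_nonneg_ae (ae_of_all _ fun x => (exp_pos _).le)
    hgm.aestronglyMeasurable]
  have h1 : ∫⁻ x, ENNReal.ofReal (rexp (-t * x)) ∂(expMeasure r)
      = ∫⁻ x, exponentialPDF r x * ENNReal.ofReal (rexp (-t * x)) := by
    have hpdf : Measurable (gammaPDF 1 r) := (measurable_gammaPDFReal 1 r).ennreal_ofReal
    rw [expMeasure, gammaMeasure, lintegral_withDensity_eq_lintegral_mul _ hpdf hmg]
    rfl
  rw [h1, ← lintegral_add_compl (fun x => exponentialPDF r x * ENNReal.ofReal (rexp (-t * x)))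
    measurableSet_Ici (μ := volume)]
  have h2 : ∫⁻ x in (Ici (0:ℝ))ᶜ, exponentialPDF r x * ENNReal.ofReal (rexp (-t * x)) = 0 := by
    rw [compl_Ici]
    rw [setLIntegral_congr_fun measurableSet_Iio
      (fun x (hx : x < 0) => by rw [exponentialPDF_of_neg hx, zero_mul])]
    simp
  have h3 : ∫⁻ x in Ici (0:ℝ), exponentialPDF r x * ENNReal.ofReal (rexp (-t * x))
      = ∫⁻ x in Ici (0:ℝ), ENNReal.ofReal (r * rexp (-((r + t) * x))) := by
    refine setLIntegral_congr_fun measurableSet_Ici (fun x hx => ?_)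
    rw [exponentialPDF_of_nonneg hx, ← ENNReal.ofReal_mul (by positivity), mul_assoc,
      ← exp_add]
    ring_nf
  have hIoi : IntegrableOn (fun x => r * rexp (-((r + t) * x))) (Ici (0:ℝ)) := by
    rw [integrableOn_Ici_iff_integrableOn_Ioi]
    exact ((exp_neg_integrableOn_Ioi 0 hrt).const_mul r).congr
      (ae_of_all _ fun x => by simp only [neg_mul])
  have h4 : ∫⁻ x in Ici (0:ℝ), ENNReal.ofReal (r * rexp (-((r + t) * x)))
      = ENNReal.ofReal (∫ x in Ici (0:ℝ), r * rexp (-((r + t) * x))) := by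
    rw [← ofReal_integral_eq_lintegral_ofReal hIoi (ae_of_all _ fun x => by positivity)]
  have h5 : ∫ x in Ici (0:ℝ), r * rexp (-((r + t) * x)) = r / (r + t) := by
    rw [integral_Ici_eq_integral_Ioi, MeasureTheory.integral_const_mul, aux_int_Ioi hrt]
    field_simp
  rw [h2, h3, h4, h5, add_zero, ENNReal.toReal_ofReal (by positivity)]

theorem stmt19 (a : ℝ) (ha : 0 < a) (n : ℕ)
    {Ω : Type*} [MeasureSpace Ω] [IsProbabilityMeasure (ℙ : Measure Ω)]
    (X : Fin n → Ω → ℝ)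
    (hmeas : ∀ i, Measurable (X i))
    (hind : iIndepFun X ℙ)
    (hdist : ∀ i, Measure.map (X i) ℙ = expMeasure (2*a)) :
    (ℙ {ω | ∑ i, X i ω < 1/36}).toReal ≤ Real.exp (a/36) * (2/3)^n := by
  have hg : Measurable fun x : ℝ => rexp (-a * x) := by fun_prop
  have hmgf : ∀ i, mgf (X i) ℙ (-a) = 2/3 := by
    intro i
    have hmap : ∫ x, rexp (-a * x) ∂(Measure.map (X i) ℙ) = ∫ ω, rexp (-a * X i ω) ∂ℙ :=
      integral_map (hmeas i).aemeasurable (by rw [hdist i]; exact hg.aestronglyMeasurable)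
    rw [mgf, ← hmap, hdist i, aux_integral (by linarith) ha.le,
      div_eq_div_iff (by positivity) (by norm_num : (3:ℝ) ≠ 0)]
    ring
  have hint : ∀ i, Integrable (fun ω => rexp (-a * X i ω)) ℙ := by
    intro i
    have h := aux_integrable (r := 2*a) (t := a) (by linarith) ha.le
    rw [← hdist i] at h
    exact (integrable_map_measure hg.aestronglyMeasurable (hmeas i).aemeasurable).mp h
  have hS_int : Integrable (fun ω => rexp (-a * (∑ i, X i) ω)) ℙ :=
    hind.integrable_exp_mul_sum hmeas (fun i _ => hint i)
  calc (ℙ {ω | ∑ i, X i ω < 1/36}).toReal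
      ≤ (ℙ {ω | (∑ i, X i) ω ≤ 1/36}).toReal := by
        refine ENNReal.toReal_mono (measure_ne_top _ _) (measure_mono fun ω hω => ?_)
        simp only [Set.mem_setOf_eq, Finset.sum_apply] at *
        exact hω.le
    _ ≤ rexp (-(-a) * (1/36)) * mgf (∑ i, X i) ℙ (-a) :=
        measure_le_le_exp_mul_mgf (1/36) (by linarith) hS_int
    _ = rexp (a/36) * (2/3)^n := by
        rw [hind.mgf_sum hmeas]
        have : ∏ i, mgf (X i) ℙ (-a) = (2/3 : ℝ)^n := by
          rw [Finset.prod_congr rfl (fun i _ => hmgf i), Finset.prod_const,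
            Finset.card_univ, Fintype.card_fin]
        rw [this]
        have harg : -(-a) * (1/36 : ℝ) = a/36 := by ring
        rw [harg]
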